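/- Let T be a tree (a connected acyclic graph) in which every vertex has degree at least 3. Then every nonempty finite set K of vertices of T satisfies 2·|∂K| ≥ |K|, where ∂K denotes the inner vertex boundary of K, i.e. the set of vertices v ∈ K having at least one neighbor outside K. -/

import Mathlib

open Finset SimpleGraph

private lemma aux_long_path {V : Type*} [DecidableEq V] {G : SimpleGraph V}
    [DecidableRel G.Adj] (hacyc : G.IsAcyclic) (S : Finset V)
    (hbig : ∀ v ∈ S, 2 ≤ (S.filter (G.Adj v)).card) (hS : S.Nonempty) :
    ∀ n : ℕ, ∃ (v z : V) (p : G.Walk v z), p.IsPath ∧ (∀ x ∈ p.support, x ∈ S) ∧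
      p.length = n := by
  intro n
  induction n with
  | zero =>
    obtain ⟨v, hv⟩ := hS
    exact ⟨v, v, SimpleGraph.Walk.nil, SimpleGraph.Walk.IsPath.nil, by simp [hv], rfl⟩
  | succ n ihn =>
    obtain ⟨v, z, p, hp, hsub, hlen⟩ := ihn
    have hvS : v ∈ S := hsub v p.start_mem_support
    by_cases hex : ∃ w ∈ S.filter (G.Adj v), w ∉ p.support
    · obtain ⟨w, hwf, hwns⟩ := hex
      rw [Finset.mem_filter] at hwf
      refine ⟨w, z, SimpleGraph.Walk.cons hwf.2.symm p, ?_, ?_, by simp [hlen]⟩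
      · rw [SimpleGraph.Walk.cons_isPath_iff]
        exact ⟨hp, hwns⟩
      · intro x hx
        rw [SimpleGraph.Walk.support_cons, List.mem_cons] at hx
        rcases hx with rfl | hx
        · exact hwf.1
        · exact hsub x hx
    · exfalso
      push_neg at hex
      cases p with
      | nil =>
        have h2 := hbig v hvS
        have hpos : 0 < (S.filter (G.Adj v)).card := by omega
        obtain ⟨w, hwf⟩ := Finset.card_pos.mp hpos
        have hws := hex w hwf
        rw [SimpleGraph.Walk.support_nil, List.mem_singleton] at hws
        rw [Finset.mem_filter] at hwf
        exact G.loopless.irrefl v (hws ▸ hwf.2)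
      | cons h q =>
        rename_i u
        -- find a neighbor w in S with w ≠ u
        have h2 : 1 < (S.filter (G.Adj v)).card := hbig v hvS
        obtain ⟨a, ha, b, hb, hab⟩ := Finset.one_lt_card.mp h2
        obtain ⟨w, hwf, hwu⟩ : ∃ w ∈ S.filter (G.Adj v), w ≠ u := by
          by_cases hau : a = u
          · exact ⟨b, hb, fun hbu => hab (hau.trans hbu.symm)⟩
          · exact ⟨a, ha, hau⟩
        have hadj : G.Adj v w := (Finset.mem_filter.mp hwf).2
        have hwsup : w ∈ (SimpleGraph.Walk.cons h q).support := hex w hwf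
        have huniq := hacyc.path_unique (SimpleGraph.Path.singleton hadj)
          ⟨(SimpleGraph.Walk.cons h q).takeUntil w hwsup, hp.takeUntil hwsup⟩
        have h1 : (SimpleGraph.Walk.cons hadj SimpleGraph.Walk.nil : G.Walk v w)
            = (SimpleGraph.Walk.cons h q).takeUntil w hwsup :=
          congrArg Subtype.val huniq
        have h2' := (SimpleGraph.Walk.cons h q).take_spec hwsup
        rw [← h1] at h2'
        simp only [SimpleGraph.Walk.cons_append, SimpleGraph.Walk.nil_append] at h2'
        have := congrArg (fun r => r.getVert 1) h2'
        simp only [SimpleGraph.Walk.getVert_cons_succ, SimpleGraph.Walk.getVert_zero] at this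
        exact hwu this

private lemma exists_leaf {V : Type*} [DecidableEq V] {G : SimpleGraph V}
    [DecidableRel G.Adj] (hacyc : G.IsAcyclic) (S : Finset V) (hS : S.Nonempty) :
    ∃ v ∈ S, (S.filter (G.Adj v)).card ≤ 1 := by
  by_contra h
  push_neg at h
  have hbig : ∀ v ∈ S, 2 ≤ (S.filter (G.Adj v)).card := fun v hv => h v hv
  obtain ⟨v, z, p, hp, hsub, hlen⟩ := aux_long_path hacyc S hbig hS S.card
  have hnd : p.support.Nodup := hp.support_nodup
  have hlen2 : p.support.length = S.card + 1 := by
    rw [SimpleGraph.Walk.length_support, hlen]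
  have hsubset : p.support.toFinset ⊆ S := by
    intro x hx
    exact hsub x (List.mem_toFinset.mp hx)
  have := Finset.card_le_card hsubset
  rw [List.toFinset_card_of_nodup hnd, hlen2] at this
  omega

private lemma forest_sum_le {V : Type*} [DecidableEq V] {G : SimpleGraph V}
    [DecidableRel G.Adj] (hacyc : G.IsAcyclic) (S : Finset V) :
    (∑ v ∈ S, (S.filter (G.Adj v)).card) ≤ 2 * S.card := by
  induction S using Finset.strongInduction with
  | _ S ih =>
  rcases S.eq_empty_or_nonempty with rfl | hS
  · simp
  obtain ⟨v, hv, hleaf⟩ := exists_leaf hacyc S hS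
  have hsplit : ∑ w ∈ S, (S.filter (G.Adj w)).card
      = (S.filter (G.Adj v)).card + ∑ w ∈ S.erase v, (S.filter (G.Adj w)).card :=
    (Finset.add_sum_erase S _ hv).symm
  have hstep : ∀ w ∈ S.erase v, (S.filter (G.Adj w)).card
      = ((S.erase v).filter (G.Adj w)).card + (if G.Adj w v then 1 else 0) := by
    intro w _
    rw [Finset.filter_erase]
    by_cases hadj : G.Adj w v
    · have hvmem : v ∈ S.filter (G.Adj w) := Finset.mem_filter.mpr ⟨hv, hadj⟩
      rw [Finset.card_erase_of_mem hvmem, if_pos hadj]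
      have : 1 ≤ (S.filter (G.Adj w)).card := Finset.card_pos.mpr ⟨v, hvmem⟩
      omega
    · have hvmem : v ∉ S.filter (G.Adj w) := fun hc => hadj (Finset.mem_filter.mp hc).2
      rw [Finset.erase_eq_of_notMem hvmem, if_neg hadj]
      omega
  have hsum2 : ∑ w ∈ S.erase v, (S.filter (G.Adj w)).card
      = (∑ w ∈ S.erase v, ((S.erase v).filter (G.Adj w)).card)
        + ((S.erase v).filter (fun w => G.Adj w v)).card := by
    rw [Finset.sum_congr rfl hstep, Finset.sum_add_distrib, Finset.card_filter]
  have hle1 : ((S.erase v).filter (fun w => G.Adj w v)).card ≤ 1 := by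
    refine le_trans (Finset.card_le_card ?_) hleaf
    intro x hx
    rw [Finset.mem_filter] at hx ⊢
    exact ⟨Finset.mem_of_mem_erase hx.1, hx.2.symm⟩
  have hih := ih (S.erase v) (Finset.erase_ssubset hv)
  have hcard : (S.erase v).card = S.card - 1 := Finset.card_erase_of_mem hv
  have hpos : 1 ≤ S.card := Finset.card_pos.mpr hS
  omega

theorem tree_inner_boundary_bound {V : Type*} (G : SimpleGraph V) [G.LocallyFinite]
    (hconn : G.Connected) (hacyc : G.IsAcyclic)
    (hdeg : ∀ v : V, 3 ≤ G.degree v)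
    (K : Finset V) (hK : K.Nonempty) :
    K.card ≤ 2 * {v : V | v ∈ K ∧ ∃ w, w ∉ K ∧ G.Adj v w}.ncard := by
  classical
  set B : Finset V := K.filter (fun v => ∃ w, w ∉ K ∧ G.Adj v w) with hBdef
  have hset : {v : V | v ∈ K ∧ ∃ w, w ∉ K ∧ G.Adj v w} = ↑B := by
    ext x; simp [hBdef]
  rw [hset, Set.ncard_coe_finset]
  set d : V → ℕ := fun v => (K.filter (G.Adj v)).card with hddef
  set B0 : Finset V := B.filter (fun v => d v = 0) with hB0def
  have hBK : B ⊆ K := Finset.filter_subset _ _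
  have hB0B : B0 ⊆ B := Finset.filter_subset _ _
  -- interior vertices have induced degree ≥ 3
  have hint : ∀ v ∈ K \ B, 3 ≤ d v := by
    intro v hv
    rw [Finset.mem_sdiff] at hv
    have hsub : G.neighborFinset v ⊆ K.filter (G.Adj v) := by
      intro w hw
      rw [SimpleGraph.mem_neighborFinset] at hw
      refine Finset.mem_filter.mpr ⟨?_, hw⟩
      by_contra hwK
      exact hv.2 (Finset.mem_filter.mpr ⟨hv.1, w, hwK, hw⟩)
    calc 3 ≤ G.degree v := hdeg v
      _ = (G.neighborFinset v).card := rfl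
      _ ≤ d v := Finset.card_le_card hsub
  -- edges of K never touch B0
  have hfilt : ∀ v ∈ K, K.filter (G.Adj v) = (K \ B0).filter (G.Adj v) := by
    intro v hvK
    ext w
    simp only [Finset.mem_filter, Finset.mem_sdiff]
    constructor
    · rintro ⟨hwK, hadj⟩
      refine ⟨⟨hwK, fun hwB0 => ?_⟩, hadj⟩
      have hdw : d w = 0 := (Finset.mem_filter.mp hwB0).2
      have hvm : v ∈ K.filter (G.Adj w) := Finset.mem_filter.mpr ⟨hvK, hadj.symm⟩
      have hgt : 0 < d w := Finset.card_pos.mpr ⟨v, hvm⟩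
      omega
    · rintro ⟨⟨hwK, _⟩, hadj⟩
      exact ⟨hwK, hadj⟩
  -- upper bound on the degree sum
  have hupper : ∑ v ∈ K, d v ≤ 2 * (K \ B0).card := by
    have hKsplit : ∑ v ∈ K \ B0, d v + ∑ v ∈ B0, d v = ∑ v ∈ K, d v :=
      Finset.sum_sdiff (hB0B.trans hBK)
    have hzero : ∑ v ∈ B0, d v = 0 := by
      refine Finset.sum_eq_zero fun v hv => (Finset.mem_filter.mp hv).2
    have heq : ∑ v ∈ K \ B0, d v = ∑ v ∈ K \ B0, ((K \ B0).filter (G.Adj v)).card := by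
      refine Finset.sum_congr rfl fun v hv => ?_
      rw [hddef]
      simp only
      rw [hfilt v (Finset.mem_sdiff.mp hv).1]
    have := forest_sum_le hacyc (K \ B0) (G := G)
    omega
  -- lower bound on the degree sum
  have hlower : 3 * (K \ B).card + (B \ B0).card ≤ ∑ v ∈ K, d v := by
    have hKsplit : ∑ v ∈ K \ B, d v + ∑ v ∈ B, d v = ∑ v ∈ K, d v :=
      Finset.sum_sdiff hBK
    have hBsplit : ∑ v ∈ B \ B0, d v + ∑ v ∈ B0, d v = ∑ v ∈ B, d v :=
      Finset.sum_sdiff hB0B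
    have h1 : 3 * (K \ B).card ≤ ∑ v ∈ K \ B, d v := by
      calc 3 * (K \ B).card = ∑ _v ∈ K \ B, 3 := by rw [Finset.sum_const]; ring
        _ ≤ ∑ v ∈ K \ B, d v := Finset.sum_le_sum hint
    have h2 : (B \ B0).card ≤ ∑ v ∈ B \ B0, d v := by
      calc (B \ B0).card = ∑ _v ∈ B \ B0, 1 := by rw [Finset.sum_const]; ring
        _ ≤ ∑ v ∈ B \ B0, d v := by
          refine Finset.sum_le_sum fun v hv => ?_
          rw [Finset.mem_sdiff] at hv
          have : d v ≠ 0 := fun h0 => hv.2 (Finset.mem_filter.mpr ⟨hv.1, h0⟩)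
          omega
    omega
  have hc1 : (K \ B).card = K.card - B.card := Finset.card_sdiff_of_subset hBK
  have hc2 : (B \ B0).card = B.card - B0.card := Finset.card_sdiff_of_subset hB0B
  have hc3 : (K \ B0).card = K.card - B0.card := Finset.card_sdiff_of_subset (hB0B.trans hBK)
  have hcb : B.card ≤ K.card := Finset.card_le_card hBK
  have hcb0 : B0.card ≤ B.card := Finset.card_le_card hB0B
  omega
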